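/- arXiv:2409.04919 — 2 statements merged into one kernel-verified Lean document; each statement's English description precedes it below -/
import Mathlib

section
/- Let $b_1, \ldots, b_K \in \mathbb{R}^{d-k}$ be unit vectors with $\|\sin\Theta(b_r, b_s)\| \geq \sqrt{2}c$ for all $r \neq s$, where $c > 0$ is a constant, and let $0 < \varepsilon < 1/2$. Define $B_r \in \mathbb{R}^{d\times k}$ whose first $k-1$ columns are the standard basis vectors $e_1, \ldots, e_{k-1}$ of $\mathbb{R}^d$ and whose last column is $(\sqrt{1-\varepsilon}\, e_k; \sqrt{\varepsilon}\, b_r)$ (concatenating a $k$-dimensional and $(d-k)$-dimensional part). Then each $B_r$ has orthonormal columns, and for any $r \neq s$, $\|B_r B_r^\intercal - B_s B_s^\intercal\| \geq c\sqrt{\varepsilon}$. -/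
/-!
All `B_r` share the columns `e₁, …, e_{k-1}`, so `B_r B_rᵀ - B_s B_sᵀ = v_r v_rᵀ - v_s v_sᵀ`
for the last columns `v_r = (√(1-ε) e_k; √ε b_r)`. For unit vectors `u, w` with `t = u ⬝ᵥ w`,
the spectral norm of `u uᵀ - w wᵀ` is at least `√(1 - t²)` (evaluate at `u`) and at most
`√2 √(1 - t²)` (Frobenius bound). Since `v_r ⬝ᵥ v_s = 1 - ε + ε t` with `t = b_r ⬝ᵥ b_s`,
`1 - (v_r ⬝ᵥ v_s)² = ε (1 - t²) + ε (1 - ε) (1 - t)² ≥ ε (1 - t²)`, which turns the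
separation `√2 c` of the `b_r` into the separation `c √ε` of the `B_r`.
-/

open Matrix

noncomputable def specNorm {n : Type*} [Fintype n] [DecidableEq n]
    (A : Matrix n n ℝ) : ℝ :=
  ‖Matrix.toEuclideanCLM (𝕜 := ℝ) A‖

section SpectralNorm

variable {n : Type*} [Fintype n] [DecidableEq n]

lemma sqrt_dotProduct_mulVec_le (A : Matrix n n ℝ) (x : n → ℝ) :
    √(A *ᵥ x ⬝ᵥ A *ᵥ x) ≤ specNorm A * √(x ⬝ᵥ x) := by
  have h := (toEuclideanCLM (𝕜 := ℝ) A).le_opNorm (WithLp.toLp 2 x)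
  simpa only [toEuclideanCLM_toLp, EuclideanSpace.norm_eq, PiLp.toLp_apply, Real.norm_eq_abs,
    sq, abs_mul_abs_self, dotProduct, specNorm] using h

lemma specNorm_le_sqrt_sum_sq (A : Matrix n n ℝ) :
    specNorm A ≤ √(∑ i, ∑ j, A i j ^ 2) := by
  refine ContinuousLinearMap.opNorm_le_bound _ (Real.sqrt_nonneg _) fun x => ?_
  obtain ⟨y, rfl⟩ : ∃ y : n → ℝ, WithLp.toLp 2 y = x := ⟨x.ofLp, rfl⟩
  simp only [toEuclideanCLM_toLp, EuclideanSpace.norm_eq, Real.norm_eq_abs, sq_abs]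
  rw [← Real.sqrt_mul (by positivity), Finset.sum_mul]
  refine Real.sqrt_le_sqrt (Finset.sum_le_sum fun i _ => ?_)
  simpa [mulVec, dotProduct] using Finset.sum_mul_sq_le_sq_mul_sq Finset.univ (A i) y

omit [DecidableEq n] in
lemma vecMulVec_sub_mulVec (u w x : n → ℝ) :
    (vecMulVec u u - vecMulVec w w) *ᵥ x = (u ⬝ᵥ x) • u - (w ⬝ᵥ x) • w := by
  simp [sub_mulVec, vecMulVec_mulVec]

variable {u w : n → ℝ}

lemma sqrt_one_sub_sq_le_specNorm_vecMulVec_sub (hu : u ⬝ᵥ u = 1) (hw : w ⬝ᵥ w = 1) :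
    √(1 - (u ⬝ᵥ w) ^ 2) ≤ specNorm (vecMulVec u u - vecMulVec w w) := by
  have h := sqrt_dotProduct_mulVec_le (vecMulVec u u - vecMulVec w w) u
  have hnorm : (vecMulVec u u - vecMulVec w w) *ᵥ u ⬝ᵥ (vecMulVec u u - vecMulVec w w) *ᵥ u
      = 1 - (u ⬝ᵥ w) ^ 2 := by
    simp only [vecMulVec_sub_mulVec, sub_dotProduct, dotProduct_sub, smul_dotProduct,
      dotProduct_smul, smul_eq_mul, hu, hw, dotProduct_comm w u]
    ring
  rwa [hnorm, hu, Real.sqrt_one, mul_one] at h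

lemma specNorm_vecMulVec_sub_le (hu : u ⬝ᵥ u = 1) (hw : w ⬝ᵥ w = 1) :
    specNorm (vecMulVec u u - vecMulVec w w) ≤ √2 * √(1 - (u ⬝ᵥ w) ^ 2) := by
  have hsum : ∑ i, ∑ j, (vecMulVec u u - vecMulVec w w) i j ^ 2 = 2 * (1 - (u ⬝ᵥ w) ^ 2) := by
    have e : ∀ i j, (vecMulVec u u - vecMulVec w w) i j ^ 2
        = (u i * u i) * (u j * u j) + (w i * w i) * (w j * w j)
          - 2 * ((u i * w i) * (u j * w j)) :=
      fun i j => by simp only [Matrix.sub_apply, vecMulVec_apply]; ring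
    simp only [e, Finset.sum_sub_distrib, Finset.sum_add_distrib, ← Finset.mul_sum,
      ← Finset.sum_mul]
    simp only [dotProduct] at hu hw ⊢
    rw [hu, hw]
    ring
  rw [← Real.sqrt_mul zero_le_two, ← hsum]
  exact specNorm_le_sqrt_sum_sq _

end SpectralNorm

section Frame

variable {m ι R : Type*} [DecidableEq ι]

lemma updateCol_mul_transpose_sub [Fintype ι] [Ring R] (M : Matrix m ι R) (j : ι)
    (c d : m → R) :
    M.updateCol j c * (M.updateCol j c)ᵀ - M.updateCol j d * (M.updateCol j d)ᵀ
      = vecMulVec c c - vecMulVec d d := by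
  ext i i'
  simp only [Matrix.sub_apply, mul_apply, transpose_apply, ← Finset.sum_sub_distrib,
    vecMulVec_apply]
  rw [Finset.sum_eq_single j (fun j' _ hj' => by simp [updateCol_ne hj']) (by simp)]
  simp

lemma updateCol_transpose_mul_self [Fintype m] [CommRing R] {M : Matrix m ι R}
    (hM : Mᵀ * M = 1) {j : ι} {c : m → R} (hc : c ⬝ᵥ c = 1)
    (horth : ∀ j' ≠ j, (Mᵀ *ᵥ c) j' = 0) :
    (M.updateCol j c)ᵀ * M.updateCol j c = 1 := by
  ext a b
  have hab := congrFun (congrFun hM a) b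
  simp only [mul_apply, transpose_apply, updateCol_apply] at hab ⊢
  by_cases ha : a = j <;> by_cases hb : b = j
  · subst ha hb
    simpa [dotProduct] using hc
  · subst ha
    simpa [hb, one_apply_ne (Ne.symm hb), mulVec, dotProduct, mul_comm] using horth b hb
  · subst hb
    simpa [ha, one_apply_ne ha, mulVec, dotProduct] using horth a ha
  · simpa [ha, hb] using hab

variable {κ : Type*} [Fintype ι] [Fintype κ] (i₀ : ι) {ε : ℝ}

noncomputable def packingColumn (ε : ℝ) (β : κ → ℝ) : ι ⊕ κ → ℝ :=
  Sum.elim (Pi.single i₀ √(1 - ε)) (√ε • β)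

noncomputable def packingFrame (ε : ℝ) (β : κ → ℝ) : Matrix (ι ⊕ κ) ι ℝ :=
  (fromRows 1 0).updateCol i₀ (packingColumn i₀ ε β)

lemma packingColumn_dotProduct (hε₀ : 0 ≤ ε) (hε₁ : ε ≤ 1) (β β' : κ → ℝ) :
    packingColumn i₀ ε β ⬝ᵥ packingColumn i₀ ε β' = 1 - ε + ε * (β ⬝ᵥ β') := by
  rw [packingColumn, packingColumn, sumElim_dotProduct_sumElim, single_dotProduct,
    Pi.single_eq_same, smul_dotProduct, dotProduct_smul, smul_eq_mul, smul_eq_mul,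
    Real.mul_self_sqrt (by linarith), ← mul_assoc, Real.mul_self_sqrt hε₀]

lemma packingColumn_dotProduct_self (hε₀ : 0 ≤ ε) (hε₁ : ε ≤ 1) {β : κ → ℝ}
    (hβ : β ⬝ᵥ β = 1) : packingColumn i₀ ε β ⬝ᵥ packingColumn i₀ ε β = 1 := by
  rw [packingColumn_dotProduct i₀ hε₀ hε₁, hβ]
  ring

lemma packingFrame_transpose_mul_self (hε₀ : 0 ≤ ε) (hε₁ : ε ≤ 1) {β : κ → ℝ}
    (hβ : β ⬝ᵥ β = 1) : (packingFrame i₀ ε β)ᵀ * packingFrame i₀ ε β = 1 := by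
  refine updateCol_transpose_mul_self (by simp [transpose_fromRows, fromCols_mul_fromRows])
    (packingColumn_dotProduct_self i₀ hε₀ hε₁ hβ) fun j hj => ?_
  simp [packingColumn, transpose_fromRows, hj]

lemma mul_one_sub_sq_le_one_sub_sq_packingColumn_dotProduct (hε₀ : 0 ≤ ε) (hε₁ : ε ≤ 1)
    (β β' : κ → ℝ) :
    ε * (1 - (β ⬝ᵥ β') ^ 2) ≤ 1 - (packingColumn i₀ ε β ⬝ᵥ packingColumn i₀ ε β') ^ 2 := by
  set t := β ⬝ᵥ β'
  have hid : 1 - (1 - ε + ε * t) ^ 2 = ε * (1 - t ^ 2) + ε * (1 - ε) * (1 - t) ^ 2 := by ring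
  rw [packingColumn_dotProduct i₀ hε₀ hε₁, hid]
  exact le_add_of_nonneg_right (mul_nonneg (mul_nonneg hε₀ (sub_nonneg.2 hε₁)) (sq_nonneg _))

lemma sqrt_mul_le_specNorm_packingFrame_sub [DecidableEq κ] (hε₀ : 0 ≤ ε) (hε₁ : ε ≤ 1)
    {β β' : κ → ℝ} (hβ : β ⬝ᵥ β = 1) (hβ' : β' ⬝ᵥ β' = 1) :
    √(ε * (1 - (β ⬝ᵥ β') ^ 2)) ≤ specNorm
      (packingFrame i₀ ε β * (packingFrame i₀ ε β)ᵀ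
        - packingFrame i₀ ε β' * (packingFrame i₀ ε β')ᵀ) := by
  rw [packingFrame, packingFrame, updateCol_mul_transpose_sub]
  exact (Real.sqrt_le_sqrt
    (mul_one_sub_sq_le_one_sub_sq_packingColumn_dotProduct i₀ hε₀ hε₁ β β')).trans
    (sqrt_one_sub_sq_le_specNorm_vecMulVec_sub (packingColumn_dotProduct_self i₀ hε₀ hε₁ hβ)
      (packingColumn_dotProduct_self i₀ hε₀ hε₁ hβ'))

end Frame

theorem packing_construction_general {k m K : ℕ} (hk : 0 < k)
    (c ε : ℝ) (hε1 : 0 < ε) (hε2 : ε < 1 / 2)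
    (b : Fin K → Fin m → ℝ) (hunit : ∀ r, ∑ i, (b r i) ^ 2 = 1)
    (hsep : ∀ r s, r ≠ s → Real.sqrt 2 * c ≤
      specNorm (Matrix.vecMulVec (b r) (b r) - Matrix.vecMulVec (b s) (b s)))
    (B : Fin K → Matrix (Fin k ⊕ Fin m) (Fin k) ℝ)
    (hB : ∀ r, B r = Matrix.of (Sum.elim
      (fun (i' : Fin k) (j : Fin k) =>
        if (j : ℕ) = k - 1 then (if (i' : ℕ) = k - 1 then Real.sqrt (1 - ε) else 0)
        else (if i' = j then 1 else 0))
      (fun (i'' : Fin m) (j : Fin k) =>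
        if (j : ℕ) = k - 1 then Real.sqrt ε * b r i'' else 0))) :
    (∀ r, (B r)ᵀ * B r = 1)
    ∧ (∀ r s, r ≠ s →
        c * Real.sqrt ε ≤ specNorm (B r * (B r)ᵀ - B s * (B s)ᵀ)) := by
  set i₀ : Fin k := ⟨k - 1, by omega⟩
  have hB_eq : ∀ r, B r = packingFrame i₀ ε (b r) := fun r => by
    ext (i | i) j <;>
      simp [hB, packingFrame, packingColumn, updateCol_apply, Pi.single_apply,
        one_apply, Fin.ext_iff, i₀]
  have hb : ∀ r, b r ⬝ᵥ b r = 1 := fun r => by simpa only [dotProduct, sq] using hunit r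
  refine ⟨fun r => hB_eq r ▸ packingFrame_transpose_mul_self i₀ hε1.le (by linarith) (hb r),
    fun r s hrs => ?_⟩
  have hcos : c ≤ √(1 - (b r ⬝ᵥ b s) ^ 2) := le_of_mul_le_mul_left
    ((hsep r s hrs).trans (specNorm_vecMulVec_sub_le (hb r) (hb s))) (by positivity)
  calc c * √ε ≤ √(1 - (b r ⬝ᵥ b s) ^ 2) * √ε := by gcongr
    _ = √(ε * (1 - (b r ⬝ᵥ b s) ^ 2)) := by rw [mul_comm, Real.sqrt_mul hε1.le]
    _ ≤ specNorm (B r * (B r)ᵀ - B s * (B s)ᵀ) := by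
      rw [hB_eq, hB_eq]
      exact sqrt_mul_le_specNorm_packingFrame_sub i₀ hε1.le (by linarith) (hb r) (hb s)

/-- The packing construction: from a `√2 c`-separated family of unit vectors
`b₁,…,b_K ∈ ℝ^{d-k}` one builds orthonormal `B_r ∈ ℝ^{d×k}` (with `ℝ^d` written in block
form `ℝ^k ⊕ ℝ^{d-k}`) that are `c√ε`-separated in principal angle distance. -/
theorem packing_construction {k m K : ℕ} (hk : 0 < k)
    (c ε : ℝ) (hc : 0 < c) (hε1 : 0 < ε) (hε2 : ε < 1 / 2)
    (b : Fin K → Fin m → ℝ) (hunit : ∀ r, ∑ i, (b r i) ^ 2 = 1)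
    (hsep : ∀ r s, r ≠ s → Real.sqrt 2 * c ≤
      specNorm (Matrix.vecMulVec (b r) (b r) - Matrix.vecMulVec (b s) (b s)))
    (B : Fin K → Matrix (Fin k ⊕ Fin m) (Fin k) ℝ)
    (hB : ∀ r, B r = Matrix.of (Sum.elim
      (fun (i' : Fin k) (j : Fin k) =>
        if (j : ℕ) = k - 1 then (if (i' : ℕ) = k - 1 then Real.sqrt (1 - ε) else 0)
        else (if i' = j then 1 else 0))
      (fun (i'' : Fin m) (j : Fin k) =>
        if (j : ℕ) = k - 1 then Real.sqrt ε * b r i'' else 0))) :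
    (∀ r, (B r)ᵀ * B r = 1)
    ∧ (∀ r s, r ≠ s →
        c * Real.sqrt ε ≤ specNorm (B r * (B r)ᵀ - B s * (B s)ᵀ)) :=
  packing_construction_general hk c ε hε1 hε2 b hunit hsep B hB
end

section
/- Let $\Sigma_1, \Sigma_2 \in \mathbb{R}^{n\times n}$ be symmetric matrices with $\Sigma_1 \succeq I_n$ and $\Sigma_2 \succeq I_n$, and let $\Delta = \Sigma_1 - \Sigma_2$. Then $\mathrm{tr}(\Sigma_1^{-1}\Sigma_2 + \Sigma_2^{-1}\Sigma_1 - 2I_n) \leq \mathrm{tr}(\Delta^2)$. -/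
/-!
With `Δ = Σ₁ - Σ₂` one has `Σ₁⁻¹Σ₂ + Σ₂⁻¹Σ₁ - 2I = Σ₂⁻¹ Δ Σ₁⁻¹ Δ`, and `Σᵢ ⪰ I` gives
`0 ⪯ Σᵢ⁻¹ ⪯ I` because `I - Σ⁻¹ = Σ⁻¹ (Σ - I)` is a product of commuting positive semidefinite
matrices. For `0 ⪯ A ⪯ I`, `B ⪯ I` and Hermitian `Δ`,
`Δ² - BΔAΔ = Δ(I - A)Δ + (I - B)(ΔAΔ)`: the first term is positive semidefinite and the second
is a product of two positive semidefinite matrices, so both have nonnegative trace.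
-/

open Matrix
open scoped MatrixOrder ComplexOrder

namespace Matrix

lemma inv_mul_add_inv_mul_sub_two_smul {m R : Type*} [Fintype m] [DecidableEq m] [CommRing R]
    {A B : Matrix m m R} (hA : IsUnit A.det) (hB : IsUnit B.det) :
    A⁻¹ * B + B⁻¹ * A - (2 : R) • 1 = B⁻¹ * (A - B) * (A⁻¹ * (A - B)) := by
  simp only [mul_sub, sub_mul, mul_assoc, mul_nonsing_inv_cancel_left A _ hA,
    nonsing_inv_mul _ hA, nonsing_inv_mul _ hB, mul_one, one_mul]
  rw [two_smul]
  abel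

variable {m 𝕜 : Type*} [DecidableEq m] [RCLike 𝕜]

lemma posDef_of_one_le {S : Matrix m m 𝕜} (h : 1 ≤ S) : S.PosDef := by
  simpa using PosDef.one.add_posSemidef (le_iff.mp h)

variable [Fintype m]

lemma PosSemidef.trace_mul_nonneg {A B : Matrix m m 𝕜} (hA : A.PosSemidef)
    (hB : B.PosSemidef) : 0 ≤ (A * B).trace := by
  obtain ⟨C, rfl⟩ := CStarAlgebra.nonneg_iff_eq_star_mul_self.mp hA.nonneg
  rw [star_eq_conjTranspose, mul_assoc, trace_mul_comm]
  exact (hB.mul_mul_conjTranspose_same C).trace_nonneg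

lemma inv_le_one_of_one_le {S : Matrix m m 𝕜} (h : 1 ≤ S) : S⁻¹ ≤ 1 := by
  have hS : IsUnit S.det := (posDef_of_one_le h).isUnit.map detMonoidHom
  have hcomm : Commute S⁻¹ S := (nonsing_inv_mul S hS).trans (mul_nonsing_inv S hS).symm
  have hnonneg : 0 ≤ S⁻¹ * (S - 1) :=
    (hcomm.sub_right (Commute.one_right _)).mul_nonneg
      (posDef_of_one_le h).posSemidef.inv.nonneg (sub_nonneg.2 h)
  rwa [mul_sub, nonsing_inv_mul S hS, mul_one, sub_nonneg] at hnonneg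

lemma trace_mul_mul_mul_le_trace_mul_self {A B D : Matrix m m 𝕜} (hA : 0 ≤ A) (hA₁ : A ≤ 1)
    (hB₁ : B ≤ 1) (hD : D.IsHermitian) :
    (B * D * (A * D)).trace ≤ (D * D).trace := by
  have hsplit : D * D - B * D * (A * D) = D * (1 - A) * D + (1 - B) * (D * A * D) := by
    noncomm_ring
  have hDAD : (D * A * D).PosSemidef := by
    simpa [hD.eq] using hA.posSemidef.conjTranspose_mul_mul_same D
  have hD1AD : (D * (1 - A) * D).PosSemidef := by
    simpa [hD.eq] using (sub_nonneg.2 hA₁).posSemidef.conjTranspose_mul_mul_same D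
  rw [← sub_nonneg, ← trace_sub, hsplit, trace_add]
  exact add_nonneg hD1AD.trace_nonneg ((sub_nonneg.2 hB₁).posSemidef.trace_mul_nonneg hDAD)

end Matrix

/-- For symmetric matrices `Σ₁, Σ₂ ⪰ Iₙ` and `Δ = Σ₁ - Σ₂`,
`tr(Σ₁⁻¹Σ₂ + Σ₂⁻¹Σ₁ - 2I) ≤ tr(Δ²)`. -/
theorem trace_inverse_bound {n : ℕ} (S1 S2 : Matrix (Fin n) (Fin n) ℝ)
    (h1 : (S1 - 1).PosSemidef) (h2 : (S2 - 1).PosSemidef) :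
    Matrix.trace (S1⁻¹ * S2 + S2⁻¹ * S1 - (2 : ℝ) • (1 : Matrix (Fin n) (Fin n) ℝ))
      ≤ Matrix.trace ((S1 - S2) * (S1 - S2)) := by
  have hS1 : S1.PosDef := posDef_of_one_le h1
  have hS2 : S2.PosDef := posDef_of_one_le h2
  rw [inv_mul_add_inv_mul_sub_two_smul (hS1.isUnit.map detMonoidHom)
    (hS2.isUnit.map detMonoidHom)]
  exact trace_mul_mul_mul_le_trace_mul_self hS1.posSemidef.inv.nonneg
    (Matrix.inv_le_one_of_one_le h1) (Matrix.inv_le_one_of_one_le h2)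
    (hS1.isHermitian.sub hS2.isHermitian)
end
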